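/- Knight's identity: For all real numbers u and v, ρ_τ(u−v) − ρ_τ(u) = −v(τ − 𝟙{u ≤ 0}) + ∫₀^v (𝟙{u ≤ z} − 𝟙{u ≤ 0}) dz, where ρ_τ(t) = t(τ − 𝟙{t < 0}) is the quantile (pinball) loss. -/

import Mathlib

/-!
Since `𝟙{u ≤ z}` is the right derivative of `z ↦ max z u`, the integral equals
`max v u - max 0 u - v 𝟙{u ≤ 0}`, and writing `ρ_τ(t) = τ t - min t 0` reduces the identity to
`min u 0 - min (u - v) 0 = max v u - max 0 u`.
-/

open Set intervalIntegral

/-- The pinball (quantile) loss `ρ_τ(t) = t(τ − 𝟙{t < 0})`. -/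
noncomputable def pinball (τ t : ℝ) : ℝ := t * (τ - if t < 0 then 1 else 0)

lemma pinball_eq_mul_sub_min (τ t : ℝ) : pinball τ t = τ * t - min t 0 := by
  unfold pinball
  split_ifs with ht
  · rw [min_eq_left ht.le]; ring
  · rw [min_eq_right (not_lt.1 ht)]; ring

lemma monotone_step (u : ℝ) : Monotone (fun z : ℝ => if u ≤ z then (1 : ℝ) else 0) := by
  intro x y hxy
  dsimp only
  split_ifs with hx hy <;> norm_num
  exact hy (hx.trans hxy)

lemma hasDerivWithinAt_max_const_Ioi (u z : ℝ) :
    HasDerivWithinAt (fun y => max y u) (if u ≤ z then 1 else 0) (Ioi z) z := by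
  split_ifs with huz
  · refine (hasDerivWithinAt_id z _).congr (fun y hy => ?_) (max_eq_left huz)
    exact max_eq_left (huz.trans (le_of_lt hy))
  · have hzu : z < u := not_le.1 huz
    refine (hasDerivWithinAt_const z _ u).congr_of_eventuallyEq ?_ (max_eq_right hzu.le)
    filter_upwards [nhdsWithin_le_nhds (Iio_mem_nhds hzu)] with y hy
    exact max_eq_right (le_of_lt hy)

lemma integral_step (u a b : ℝ) :
    ∫ z in a..b, (if u ≤ z then (1 : ℝ) else 0) = max b u - max a u :=
  integral_eq_sub_of_hasDeriv_right
    ((continuous_id.max continuous_const).continuousOn)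
    (fun z _ => hasDerivWithinAt_max_const_Ioi u z)
    (monotone_step u).intervalIntegrable

theorem knight_identity_general (τ : ℝ) (u v : ℝ) :
    pinball τ (u - v) - pinball τ u =
      -v * (τ - if u ≤ 0 then 1 else 0) +
        ∫ z in (0:ℝ)..v,
          ((if u ≤ z then (1:ℝ) else 0) - (if u ≤ 0 then 1 else 0)) := by
  rw [integral_sub (monotone_step u).intervalIntegrable intervalIntegrable_const,
    integral_step, integral_const, smul_eq_mul, pinball_eq_mul_sub_min, pinball_eq_mul_sub_min]
  have hminmax : min u 0 - min (u - v) 0 = max v u - max 0 u := by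
    simp only [min_def, max_def]
    split_ifs <;> linarith
  linarith

/-- Knight's identity. -/
theorem knight_identity (τ : ℝ) (hτ : τ ∈ Set.Ioo (0:ℝ) 1) (u v : ℝ) :
    pinball τ (u - v) - pinball τ u =
      -v * (τ - if u ≤ 0 then 1 else 0) +
        ∫ z in (0:ℝ)..v,
          ((if u ≤ z then (1:ℝ) else 0) - (if u ≤ 0 then 1 else 0)) :=
  knight_identity_general τ u v
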